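/- arXiv:1810.02304 — 2 statements merged into one kernel-verified Lean document; each statement's English description precedes it below -/
import Mathlib

section
/- Let G be a chordal graph, let K_i be a maximal clique of G, and let v ∈ K_i. Then v is K_i-free (i.e., not contained in any clique-intersection X' ⊊ K_i with |X'| ≥ 2) if and only if either v is simplicial in G, or v is a cut-vertex of G such that no minimal separator of G contained in K_i other than {v} contains v. -/
/-
A chordal graph has the following fan property: a vertex off a chordless path that is adjacent to
both its ends is adjacent to all of it (a chord of the closed cycle must start at that vertex, and
one recurses on the two halves). Hence if `C` is connected, `K` is a clique disjoint from `C` and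
every vertex of `K` has a neighbour in `C`, some vertex of `C` is adjacent to all of `K`.

For `b ∉ K_i`, the vertices of `K_i` adjacent to the component of `b` in `G - K_i` then form a
minimal separator (not all of `K_i`, by maximality); hence `K ∩ K_i` lies in a minimal separator
`S ⊆ K_i` for every maximal clique `K ≠ K_i`. On the other hand, each of the two full components of
a minimal separator `S ⊆ K_i` contains a vertex adjacent to all of `S`; these two vertices are not
adjacent, so one lies outside `K_i` and `S` lies in a maximal clique other than `K_i`. So a
`K_i`-free vertex `v` lies in no minimal separator `S ⊆ K_i` except `{v}`; if `v` is not
simplicial, it has a neighbour outside `K_i`, which yields such a separator containing `v`, so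
`{v}` separates. Conversely, a clique-intersection `X ⊊ K_i` containing `v` lies in some `K ∩ K_i`
with `K ≠ K_i`: impossible if `v` is simplicial (its only maximal clique is its closed
neighbourhood), and otherwise `X` lies in a minimal separator, which must be `{v}`.
-/

def IsMaxClique {α : Type*} (G : SimpleGraph α) (K : Set α) : Prop :=
  G.IsClique K ∧ ∀ K', G.IsClique K' → K ⊆ K' → K' = K

def IsCliqueIntersection {α : Type*} (G : SimpleGraph α) (X : Set α) : Prop :=
  ∃ 𝒦 : Set (Set α), 𝒦.Nonempty ∧ (∀ K ∈ 𝒦, IsMaxClique G K) ∧ X = ⋂₀ 𝒦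

/-- `G` is chordal: every cycle of length at least 4 has a chord. -/
def Chordal {α : Type*} (G : SimpleGraph α) : Prop :=
  ∀ (v : α) (p : G.Walk v v), p.IsCycle → 4 ≤ p.length →
    ∃ x ∈ p.support, ∃ y ∈ p.support, G.Adj x y ∧ s(x, y) ∉ p.edges

def IsUVSep {α : Type*} (G : SimpleGraph α) (S : Set α) (u v : α) : Prop :=
  u ∉ S ∧ v ∉ S ∧ ∀ p : G.Walk u v, ∃ w ∈ p.support, w ∈ S

def IsMinSep {α : Type*} (G : SimpleGraph α) (S : Set α) : Prop :=
  ∃ u v : α, u ≠ v ∧ ¬ G.Adj u v ∧ IsUVSep G S u v ∧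
    ∀ S' ⊂ S, ¬ IsUVSep G S' u v

/-- `v` is `K`-free: `v` lies in no clique-intersection `X' ⊊ K` of size at
least two. -/
def KFree {α : Type*} (G : SimpleGraph α) (K : Set α) (v : α) : Prop :=
  ¬ ∃ X' : Set α, IsCliqueIntersection G X' ∧ X' ⊂ K ∧ v ∈ X' ∧ 2 ≤ X'.ncard

/-- `v` is a cut-vertex of the connected graph `G`: every walk between some
pair of distinct vertices `a, b ≠ v` passes through `v`. -/
def IsCutVertex {α : Type*} (G : SimpleGraph α) (v : α) : Prop :=
  ∃ a b : α, a ≠ v ∧ b ≠ v ∧ a ≠ b ∧ ∀ p : G.Walk a b, v ∈ p.support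

section

open SimpleGraph Walk

variable {α : Type*} {G : SimpleGraph α}

namespace SimpleGraph.Walk

lemma IsPath.eq_of_mem_support_append {a u b x : α} {p : G.Walk a u} {q : G.Walk u b}
    (hpq : (p.append q).IsPath) (hp : x ∈ p.support) (hq : x ∈ q.support) : x = u := by
  have hnodup := hpq.support_nodup
  rw [support_append, List.nodup_append] at hnodup
  rw [← cons_tail_support, List.mem_cons] at hq
  exact hq.resolve_right fun hx => hnodup.2.2 x hp x hx rfl

lemma IsChordless.of_append_left {a u b : α} {p : G.Walk a u} {q : G.Walk u b}
    (hpq : (p.append q).IsPath) (h : (p.append q).IsChordless) : p.IsChordless := by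
  rw [isChordless_iff_forall_mem_edges] at h ⊢
  intro x y hx hy hxy
  have hmem := h (by simp [hx]) (by simp [hy]) hxy
  rw [edges_append, List.mem_append] at hmem
  refine hmem.resolve_right fun hq => hxy.ne ?_
  rw [hpq.eq_of_mem_support_append hx (fst_mem_support_of_mem_edges q hq),
    hpq.eq_of_mem_support_append hy (snd_mem_support_of_mem_edges q hq)]

lemma IsChordless.of_append_right {a u b : α} {p : G.Walk a u} {q : G.Walk u b}
    (hpq : (p.append q).IsPath) (h : (p.append q).IsChordless) : q.IsChordless := by
  rw [isChordless_iff_forall_mem_edges] at h ⊢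
  intro x y hx hy hxy
  have hmem := h (by simp [hx]) (by simp [hy]) hxy
  rw [edges_append, List.mem_append] at hmem
  refine hmem.resolve_left fun hp => hxy.ne ?_
  rw [hpq.eq_of_mem_support_append (fst_mem_support_of_mem_edges p hp) hx,
    hpq.eq_of_mem_support_append (snd_mem_support_of_mem_edges p hp) hy]

lemma exists_isPath_isChordless_of_mem_or_adj {x b : α} (q : G.Walk x b) (hq : q.IsPath)
    (hc : q.IsChordless) (a : α) (ha : ∃ y ∈ q.support, y = a ∨ G.Adj a y) :
    ∃ r : G.Walk a b, r.IsPath ∧ r.IsChordless ∧ r.support ⊆ a :: q.support := by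
  -- `r` enters `q` at the last vertex of `q` that equals or is adjacent to `a`.
  induction q with
  | nil =>
    obtain ⟨y, hy, hya⟩ := ha
    obtain rfl : y = _ := by simpa using hy
    rcases hya with rfl | hay
    · exact ⟨nil, .nil, hc, by simp⟩
    · exact ⟨hay.toWalk, .of_adj hay, hay.isChordless_toWalk, by simp⟩
  | @cons x x' b hxx' q ih =>
    have hcq : q.IsChordless := IsChordless.of_append_right (p := hxx'.toWalk) hq hc
    rw [cons_isPath_iff] at hq
    by_cases hq' : ∃ y ∈ q.support, y = a ∨ G.Adj a y
    · obtain ⟨r, hr, hrc, hrs⟩ := ih hq.1 hcq hq'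
      exact ⟨r, hr, hrc, List.Subset.trans hrs (by simp)⟩
    push Not at hq'
    obtain ⟨y, hy, hya⟩ := ha
    obtain rfl : y = x := by
      rw [support_cons, List.mem_cons] at hy
      exact hy.resolve_right fun h => hya.elim (hq' y h).1 (hq' y h).2
    rcases hya with rfl | hay
    · exact ⟨cons hxx' q, (cons_isPath_iff _ _).2 hq, hc, by simp⟩
    have haq : a ∉ (cons hxx' q).support := by
      simp only [support_cons, List.mem_cons, not_or]
      exact ⟨hay.ne, fun h => (hq' a h).1 rfl⟩
    refine ⟨cons hay (cons hxx' q), (cons_isPath_iff _ _).2 ⟨(cons_isPath_iff _ _).2 hq, haq⟩,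
      ?_, by simp⟩
    rw [isChordless_iff_forall_mem_edges] at hc ⊢
    intro u w hu hw huw
    rw [support_cons, List.mem_cons] at hu hw
    have hadj : ∀ z ∈ (cons hxx' q).support, G.Adj a z → z = y := by
      intro z hz haz
      rw [support_cons, List.mem_cons] at hz
      exact hz.resolve_right fun h => (hq' z h).2 haz
    rcases hu with rfl | hu <;> rcases hw with rfl | hw
    · exact absurd rfl huw.ne
    · simp [hadj w hw huw]
    · simp [hadj u hu huw.symm, Sym2.eq_swap]
    · exact List.mem_cons_of_mem _ (hc hu hw huw)

lemma exists_isPath_isChordless_subset {a b : α} (p : G.Walk a b) :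
    ∃ q : G.Walk a b, q.IsPath ∧ q.IsChordless ∧ q.support ⊆ p.support := by
  induction p with
  | nil => exact ⟨nil, .nil, by simp [isChordless_iff_forall_mem_edges], by simp⟩
  | @cons a a' b haa' p ih =>
    obtain ⟨q, hq, hqc, hqs⟩ := ih
    obtain ⟨r, hr, hrc, hrs⟩ := exists_isPath_isChordless_of_mem_or_adj q hq hqc a
      ⟨a', q.start_mem_support, .inr haa'⟩
    exact ⟨r, hr, hrc, List.Subset.trans hrs (List.cons_subset_cons a hqs)⟩

end SimpleGraph.Walk

namespace Chordal

lemma not_isChordless (hG : Chordal G) {v : α} {c : G.Walk v v} (hc : c.IsCycle)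
    (hlen : 4 ≤ c.length) : ¬ c.IsChordless := by
  rw [isChordless_iff_forall_mem_edges]
  intro h
  obtain ⟨x, hx, y, hy, hxy, hnot⟩ := hG v c hc hlen
  exact hnot (h hx hy hxy)

lemma exists_adj_of_isChordless (hG : Chordal G) {a b z : α} {q : G.Walk a b} (hq : q.IsPath)
    (hqc : q.IsChordless) (hlen : 2 ≤ q.length) (hz : z ∉ q.support) (hza : G.Adj z a)
    (hzb : G.Adj z b) : ∃ u ∈ q.support, u ≠ a ∧ u ≠ b ∧ G.Adj z u := by
  have hab : a ≠ b := by
    rintro rfl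
    have := length_eq_zero_iff.2 (isPath_iff_nil.1 hq)
    omega
  have hcyc : (cons hza (q.concat hzb.symm)).IsCycle := by
    refine (cons_isCycle_iff _ _).2 ⟨hq.concat hz _, ?_⟩
    simp only [edges_concat, List.concat_eq_append, List.mem_append, List.mem_singleton, not_or]
    exact ⟨fun h => hz (fst_mem_support_of_mem_edges q h), by simp [hab, hzb.ne]⟩
  by_contra! hnone
  refine hG.not_isChordless hcyc (by simp only [length_cons, length_concat]; omega) ?_
  have hends : ∀ u ∈ q.support, G.Adj z u → u = a ∨ u = b := fun u hu hzu => by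
    by_contra! h
    exact hnone u hu h.1 h.2 hzu
  rw [isChordless_iff_forall_mem_edges] at hqc ⊢
  intro x y hxc hyc hxy
  have hmem : ∀ {u}, u ∈ (cons hza (q.concat hzb.symm)).support → u = z ∨ u ∈ q.support := by
    intro u hu
    simp only [support_cons, support_concat, List.mem_cons, List.mem_append] at hu
    tauto
  simp only [edges_cons, edges_concat, List.concat_eq_append, List.mem_cons, List.mem_append]
  rcases hmem hxc with rfl | hx <;> rcases hmem hyc with rfl | hy
  · exact absurd rfl hxy.ne
  · rcases hends y hy hxy with rfl | rfl <;> simp [Sym2.eq_swap]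
  · rcases hends x hx hxy.symm with rfl | rfl <;> simp [Sym2.eq_swap]
  · exact .inr (.inl (hqc hx hy hxy))

lemma adj_of_isChordless (hG : Chordal G) {a b z : α} {q : G.Walk a b} (hq : q.IsPath)
    (hqc : q.IsChordless) (hz : z ∉ q.support) (hza : G.Adj z a) (hzb : G.Adj z b) :
    ∀ u ∈ q.support, G.Adj z u := by
  classical
  induction hn : q.length using Nat.strong_induction_on generalizing a b with
  | _ n ih =>
  intro u hu
  by_cases hlen : 2 ≤ q.length
  swap
  · obtain ⟨i, rfl, hi⟩ := mem_support_iff_exists_getVert.1 hu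
    obtain rfl | rfl : i = 0 ∨ i = q.length := by omega
    · simpa using hza
    · simpa using hzb
  obtain ⟨w, hw, hwa, hwb, hzw⟩ := hG.exists_adj_of_isChordless hq hqc hlen hz hza hzb
  have hsplit := q.take_spec hw
  have hq' : ((q.takeUntil w hw).append (q.dropUntil w hw)).IsPath := by rwa [hsplit]
  have hqc' : ((q.takeUntil w hw).append (q.dropUntil w hw)).IsChordless := by rwa [hsplit]
  rw [← hsplit, mem_support_append_iff] at hu
  rcases hu with hu | hu
  · exact ih _ (hn ▸ length_takeUntil_lt_length hw hwb) (hq.takeUntil hw)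
      (hqc'.of_append_left hq') (fun h => hz (support_takeUntil_subset_support q hw h)) hza hzw
      rfl u hu
  · exact ih _ (hn ▸ length_dropUntil_lt_length hw hwa) (hq.dropUntil hw)
      (hqc'.of_append_right hq') (fun h => hz (support_dropUntil_subset_support q hw h)) hzw hzb
      rfl u hu

lemma exists_adj_forall_of_isClique (hG : Chordal G) {C K : Set α}
    (hC : ∀ u ∈ C, ∀ w ∈ C, ∃ p : G.Walk u w, ∀ x ∈ p.support, x ∈ C) (hCne : C.Nonempty)
    (hK : K.Finite) (hKc : G.IsClique K) (hKC : Disjoint K C)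
    (hnbr : ∀ k ∈ K, ∃ c ∈ C, G.Adj c k) : ∃ c ∈ C, ∀ k ∈ K, G.Adj c k := by
  -- Add the vertices of `K` one at a time. Every earlier vertex `k'` sees both ends of a chordless
  -- path from `c₀` to the new vertex `k` through `C`, hence all of it, in particular the vertex
  -- of the path just before `k`.
  induction K, hK using Set.Finite.induction_on with
  | empty => exact ⟨hCne.some, hCne.some_mem, by simp⟩
  | @insert k K hkK _ ih =>
    obtain ⟨c₀, hc₀, hc₀K⟩ := ih (hKc.subset (Set.subset_insert _ _))
      (hKC.mono_left (Set.subset_insert _ _)) fun k' hk' => hnbr k' (.inr hk')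
    obtain ⟨c₁, hc₁, hc₁k⟩ := hnbr k (.inl rfl)
    obtain ⟨p, hp⟩ := hC c₀ hc₀ c₁ hc₁
    obtain ⟨q, hq, hqc, hqs⟩ := (p.concat hc₁k).exists_isPath_isChordless_subset
    have hqC : ∀ x ∈ q.support, x = k ∨ x ∈ C := by
      intro x hx
      have := hqs hx
      simp only [support_concat, List.mem_append, List.mem_singleton] at this
      exact this.elim (fun h => .inr (hp x h)) .inl
    have hkC : k ∉ C := Set.disjoint_left.1 hKC (.inl rfl)
    have hqnil : ¬ q.Nil := fun h => hkC (h.eq ▸ hc₀)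
    refine ⟨q.penultimate,
      (hqC _ (q.getVert_mem_support _)).resolve_left (q.adj_penultimate hqnil).ne, ?_⟩
    rintro k' (rfl | hk')
    · exact q.adj_penultimate hqnil
    have hk'k : k' ≠ k := fun h => hkK (h ▸ hk')
    have hk'q : k' ∉ q.support := fun h =>
      (hqC k' h).elim hk'k (Set.disjoint_left.1 hKC (.inr hk'))
    exact (hG.adj_of_isChordless hq hqc hk'q (hc₀K k' hk').symm
      (hKc (.inr hk') (.inl rfl) hk'k) _ (q.getVert_mem_support _)).symm

end Chordal

namespace SimpleGraph

/-- The vertex set of the component of `G - S` containing `b` (empty if `b ∈ S`). -/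
def componentAvoiding (G : SimpleGraph α) (S : Set α) (b : α) : Set α :=
  {u | ∃ p : G.Walk b u, ∀ x ∈ p.support, x ∉ S}

variable {S : Set α} {b u w : α}

lemma mem_componentAvoiding_self (hb : b ∉ S) : b ∈ G.componentAvoiding S b :=
  ⟨nil, by simpa using hb⟩

lemma notMem_of_mem_componentAvoiding (hu : u ∈ G.componentAvoiding S b) : u ∉ S :=
  let ⟨p, hp⟩ := hu; hp u p.end_mem_support

lemma disjoint_componentAvoiding : Disjoint S (G.componentAvoiding S b) :=
  Set.disjoint_right.2 fun _ => notMem_of_mem_componentAvoiding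

lemma mem_componentAvoiding_of_mem_support {p : G.Walk b u} (hp : ∀ x ∈ p.support, x ∉ S)
    (hw : w ∈ p.support) : w ∈ G.componentAvoiding S b := by
  classical
  exact ⟨p.takeUntil w hw, fun x hx => hp x (p.support_takeUntil_subset_support hw hx)⟩

lemma mem_componentAvoiding_symm (hu : u ∈ G.componentAvoiding S b) :
    b ∈ G.componentAvoiding S u :=
  let ⟨p, hp⟩ := hu; ⟨p.reverse, by simpa using hp⟩

lemma mem_componentAvoiding_trans (hu : u ∈ G.componentAvoiding S b)
    (hw : w ∈ G.componentAvoiding S u) : w ∈ G.componentAvoiding S b := by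
  obtain ⟨p, hp⟩ := hu
  obtain ⟨q, hq⟩ := hw
  refine ⟨p.append q, fun x hx => ?_⟩
  rw [mem_support_append_iff] at hx
  exact hx.elim (hp x) (hq x)

lemma mem_componentAvoiding_of_adj (hu : u ∈ G.componentAvoiding S b) (huw : G.Adj u w)
    (hw : w ∉ S) : w ∈ G.componentAvoiding S b :=
  mem_componentAvoiding_trans hu
    ⟨huw.toWalk, by simp [notMem_of_mem_componentAvoiding hu, hw]⟩

lemma exists_walk_of_mem_componentAvoiding (hu : u ∈ G.componentAvoiding S b)
    (hw : w ∈ G.componentAvoiding S b) :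
    ∃ p : G.Walk u w, ∀ x ∈ p.support, x ∈ G.componentAvoiding S b := by
  obtain ⟨p, hp⟩ := hu
  obtain ⟨q, hq⟩ := hw
  refine ⟨p.reverse.append q, fun x hx => ?_⟩
  rw [mem_support_append_iff, support_reverse, List.mem_reverse] at hx
  exact hx.elim (mem_componentAvoiding_of_mem_support hp) (mem_componentAvoiding_of_mem_support hq)

lemma exists_mem_support_adj_of_notMem_componentAvoiding (p : G.Walk u w)
    (hu : u ∈ G.componentAvoiding S b) (hw : w ∉ G.componentAvoiding S b) :
    ∃ x ∈ p.support, x ∈ S ∧ ∃ c ∈ G.componentAvoiding S b, G.Adj c x := by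
  obtain ⟨d, hd, hd₁, hd₂⟩ := p.exists_boundary_dart _ hu hw
  refine ⟨d.snd, p.dart_snd_mem_support_of_mem_darts hd, ?_, d.fst, hd₁, d.adj⟩
  by_contra hS
  exact hd₂ (mem_componentAvoiding_of_adj hd₁ d.adj hS)

end SimpleGraph

section Separators

variable {S : Set α} {u v : α}

lemma IsUVSep.symm (h : IsUVSep G S u v) : IsUVSep G S v u :=
  ⟨h.2.1, h.1, fun p => by simpa using h.2.2 p.reverse⟩

lemma IsUVSep.notMem_componentAvoiding (h : IsUVSep G S u v) :
    v ∉ G.componentAvoiding S u := fun ⟨p, hp⟩ =>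
  let ⟨x, hx, hxS⟩ := h.2.2 p; hp x hx hxS

lemma IsUVSep.exists_adj_of_minimal (h : IsUVSep G S u v)
    (hmin : ∀ S' ⊂ S, ¬ IsUVSep G S' u v) {s : α} (hs : s ∈ S) :
    ∃ c ∈ G.componentAvoiding S u, G.Adj c s := by
  have hsep := hmin _ (Set.sdiff_singleton_ssubset.2 hs)
  simp only [IsUVSep, Set.mem_sdiff, h.1, h.2.1, false_and, not_false_eq_true, true_and,
    not_forall, not_exists, not_and, not_not] at hsep
  obtain ⟨p, hp⟩ := hsep
  obtain ⟨x, hx, hxS, c, hc, hcx⟩ := exists_mem_support_adj_of_notMem_componentAvoiding p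
    (mem_componentAvoiding_self h.1) h.notMem_componentAvoiding
  exact ⟨c, hc, hp x hx hxS ▸ hcx⟩

lemma IsMinSep.isCutVertex (h : IsMinSep G {v}) : IsCutVertex G v := by
  obtain ⟨a, b, hab, -, ⟨ha, hb, hsep⟩, -⟩ := h
  exact ⟨a, b, ha, hb, hab, fun p => by simpa using hsep p⟩

lemma Chordal.exists_adj_forall_of_isUVSep [Finite α] (hG : Chordal G) (h : IsUVSep G S u v)
    (hmin : ∀ S' ⊂ S, ¬ IsUVSep G S' u v) (hS : G.IsClique S) :
    ∃ c ∈ G.componentAvoiding S u, ∀ s ∈ S, G.Adj c s :=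
  hG.exists_adj_forall_of_isClique (fun _ hx _ hy => exists_walk_of_mem_componentAvoiding hx hy)
    ⟨u, mem_componentAvoiding_self h.1⟩ S.toFinite hS disjoint_componentAvoiding
    fun _ => h.exists_adj_of_minimal hmin

end Separators

section MaxCliques

variable {K K' : Set α} {v : α}

lemma exists_isMaxClique_superset [Finite α] {S : Set α} (hS : G.IsClique S) :
    ∃ K, IsMaxClique G K ∧ S ⊆ K := by
  obtain ⟨K, hSK, hK⟩ := Finite.exists_le_maximal hS
  exact ⟨K, ⟨hK.1, fun K' hK' hKK' => (hK.2 hK' hKK').antisymm hKK'⟩, hSK⟩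

lemma IsMaxClique.exists_notMem_of_ne (hK : IsMaxClique G K) (hK' : IsMaxClique G K')
    (hne : K ≠ K') : ∃ b ∈ K, b ∉ K' := by
  by_contra! h
  exact hne (hK.2 K' hK'.1 h).symm

lemma IsMaxClique.eq_insert_neighborSet (hK : IsMaxClique G K) (hv : v ∈ K)
    (hN : G.IsClique (G.neighborSet v)) : K = insert v (G.neighborSet v) := by
  refine (hK.2 _ (hN.insert fun u hu _ => hu) fun u hu => ?_).symm
  by_cases huv : u = v
  · exact huv ▸ Set.mem_insert u _
  · exact Set.mem_insert_of_mem _ (hK.1 hv hu (Ne.symm huv))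

lemma isCliqueIntersection_inter (hK : IsMaxClique G K) (hK' : IsMaxClique G K') :
    IsCliqueIntersection G (K ∩ K') :=
  ⟨{K, K'}, Set.insert_nonempty _ _, by rintro _ (rfl | rfl) <;> assumption,
    (Set.sInter_pair K K').symm⟩

lemma IsCliqueIntersection.exists_ne_of_ssubset {X : Set α} (hX : IsCliqueIntersection G X)
    (hXK : X ⊂ K) : ∃ K', IsMaxClique G K' ∧ K' ≠ K ∧ X ⊆ K' := by
  obtain ⟨𝒦, h𝒦, h𝒦max, rfl⟩ := hX
  by_contra! h
  have h𝒦K : ∀ K' ∈ 𝒦, K' = K := fun K' hK' =>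
    by_contra fun hne => h K' (h𝒦max K' hK') hne (Set.sInter_subset_of_mem hK')
  rw [h𝒦.subset_singleton_iff.1 h𝒦K, Set.sInter_singleton] at hXK
  exact hXK.ne rfl

lemma not_kFree_of_mem_inter [Finite α] (hK : IsMaxClique G K) (hK' : IsMaxClique G K')
    (hne : K' ≠ K) {w : α} (hv : v ∈ K' ∩ K) (hw : w ∈ K' ∩ K) (hvw : v ≠ w) : ¬ KFree G K v := by
  refine not_not.2 ⟨K' ∩ K, isCliqueIntersection_inter hK' hK, ?_, hv, ?_⟩
  · exact Set.inter_subset_right.ssubset_of_ne fun h =>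
      hne (hK.2 K' hK'.1 (h ▸ Set.inter_subset_left))
  · exact (Set.one_lt_ncard (Set.toFinite _)).2 ⟨v, hv, w, hw, hvw⟩

end MaxCliques

namespace Chordal

variable [Finite α] {K Ki : Set α}

lemma exists_isMinSep_of_notMem (hG : Chordal G) (hKi : IsMaxClique G Ki) {b : α}
    (hb : b ∉ Ki) : ∃ S, IsMinSep G S ∧ S ⊆ Ki ∧ ∀ z ∈ Ki, G.Adj b z → z ∈ S := by
  set C := G.componentAvoiding Ki b
  set S := {z ∈ Ki | ∃ c ∈ C, G.Adj c z}
  have hbC : b ∈ C := mem_componentAvoiding_self hb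
  obtain ⟨y, hyKi, hyS⟩ : ∃ y ∈ Ki, y ∉ S := by
    by_contra! hKiS
    obtain ⟨c, hc, hcKi⟩ := hG.exists_adj_forall_of_isClique
      (fun _ hx _ hy => exists_walk_of_mem_componentAvoiding hx hy) ⟨b, hbC⟩ Ki.toFinite hKi.1
      disjoint_componentAvoiding fun k hk => (hKiS k hk).2
    have hcKi' := hKi.2 _ (hKi.1.insert fun k hk _ => hcKi k hk) (Set.subset_insert c Ki)
    exact notMem_of_mem_componentAvoiding hc (hcKi' ▸ Set.mem_insert c Ki)
  have hsep : IsUVSep G S b y := by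
    refine ⟨fun h => hb h.1, hyS, fun p => ?_⟩
    obtain ⟨x, hx, hxKi, c, hc, hcx⟩ := exists_mem_support_adj_of_notMem_componentAvoiding p hbC
      fun h => notMem_of_mem_componentAvoiding h hyKi
    exact ⟨x, hx, hxKi, c, hc, hcx⟩
  have hmin : ∀ S' ⊂ S, ¬ IsUVSep G S' b y := by
    intro S' hS' hsep'
    obtain ⟨s, hsS, hsS'⟩ := Set.exists_of_ssubset hS'
    have hsy : G.Adj s y := hKi.1 hsS.1 hyKi fun h => hyS (h ▸ hsS)
    obtain ⟨-, c, ⟨p, hp⟩, hcs⟩ := hsS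
    obtain ⟨x, hx, hxS'⟩ := hsep'.2.2 ((p.concat hcs).concat hsy)
    simp only [support_concat, List.mem_append, List.mem_singleton] at hx
    rcases hx with (hx | rfl) | rfl
    · exact hp x hx (hS'.1 hxS').1
    · exact hsS' hxS'
    · exact hyS (hS'.1 hxS')
  exact ⟨S, ⟨b, y, fun h => hb (h ▸ hyKi), fun h => hyS ⟨hyKi, b, hbC, h⟩, hsep, hmin⟩,
    fun _ hz => hz.1, fun z hz hbz => ⟨hz, b, hbC, hbz⟩⟩

lemma exists_isMinSep_inter (hG : Chordal G) (hKi : IsMaxClique G Ki) (hK : IsMaxClique G K)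
    (hne : K ≠ Ki) : ∃ S, IsMinSep G S ∧ S ⊆ Ki ∧ K ∩ Ki ⊆ S := by
  obtain ⟨b, hbK, hbKi⟩ := hK.exists_notMem_of_ne hKi hne
  obtain ⟨S, hS, hSKi, hbS⟩ := hG.exists_isMinSep_of_notMem hKi hbKi
  exact ⟨S, hS, hSKi, fun z ⟨hzK, hzKi⟩ => hbS z hzKi (hK.1 hbK hzK fun h => hbKi (h ▸ hzKi))⟩

lemma isMinSep_eq_singleton_of_kFree (hG : Chordal G) (hKi : IsMaxClique G Ki) {v : α}
    (hv : KFree G Ki v) : ∀ S, IsMinSep G S → S ⊆ Ki → v ∈ S → S = {v} := by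
  intro S hS hSKi hvS
  refine Set.eq_singleton_iff_unique_mem.2 ⟨hvS, fun w hwS => ?_⟩
  by_contra hwv
  obtain ⟨x, y, -, -, hsep, hmin⟩ := hS
  obtain ⟨cx, hcx, hcxS⟩ := hG.exists_adj_forall_of_isUVSep hsep hmin (hKi.1.subset hSKi)
  obtain ⟨cy, hcy, hcyS⟩ := hG.exists_adj_forall_of_isUVSep hsep.symm
    (fun S' hS' h => hmin S' hS' h.symm) (hKi.1.subset hSKi)
  obtain ⟨c, hc, hcKi, hcS⟩ : ∃ c ∉ S, c ∉ Ki ∧ ∀ s ∈ S, G.Adj c s := by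
    by_cases hcxKi : cx ∈ Ki
    · refine ⟨cy, notMem_of_mem_componentAvoiding hcy, fun hcyKi => ?_, hcyS⟩
      have hcycx : cy ∈ G.componentAvoiding S x := by
        by_cases h : cx = cy
        · exact h ▸ hcx
        · exact mem_componentAvoiding_of_adj hcx (hKi.1 hcxKi hcyKi h)
            (notMem_of_mem_componentAvoiding hcy)
      exact hsep.notMem_componentAvoiding
        (mem_componentAvoiding_trans hcycx (mem_componentAvoiding_symm hcy))
    · exact ⟨cx, notMem_of_mem_componentAvoiding hcx, hcxKi, hcxS⟩
  obtain ⟨K, hK, hcSK⟩ := exists_isMaxClique_superset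
    ((hKi.1.subset hSKi).insert fun s hs _ => hcS s hs)
  exact not_kFree_of_mem_inter hKi hK (fun h => hcKi (h ▸ hcSK (Set.mem_insert c S)))
    ⟨hcSK (.inr hvS), hSKi hvS⟩ ⟨hcSK (.inr hwS), hSKi hwS⟩ (Ne.symm hwv) hv

end Chordal

end

theorem stmt17_general {α : Type*} [Fintype α] (G : SimpleGraph α)
    (hch : Chordal G)
    (Ki : Set α) (hKi : IsMaxClique G Ki) (v : α) (hv : v ∈ Ki) :
    KFree G Ki v ↔
      (G.IsClique (G.neighborSet v) ∨
        (IsCutVertex G v ∧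
          ∀ S : Set α, IsMinSep G S → S ⊆ Ki → v ∈ S → S = {v})) := by
  constructor
  · intro hfree
    have hsep := hch.isMinSep_eq_singleton_of_kFree hKi hfree
    refine or_iff_not_imp_left.2 fun hsimp => ⟨?_, hsep⟩
    obtain ⟨b, hvb, hbKi⟩ : ∃ b, G.Adj v b ∧ b ∉ Ki := by
      by_contra! h
      exact hsimp fun a ha b hb hab => hKi.1 (h a ha) (h b hb) hab
    obtain ⟨K, hK, hvbK⟩ := exists_isMaxClique_superset (G.isClique_pair.2 fun _ => hvb)
    obtain ⟨S, hS, hSKi, hKS⟩ := hch.exists_isMinSep_inter hKi hK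
      fun h => hbKi (h ▸ hvbK (Set.mem_insert_of_mem v rfl))
    have hSv : S = {v} := hsep S hS hSKi (hKS ⟨hvbK (Set.mem_insert v _), hv⟩)
    exact (hSv ▸ hS).isCutVertex
  · rintro h ⟨X, hX, hXKi, hvX, hcard⟩
    obtain ⟨K, hK, hKKi, hXK⟩ := hX.exists_ne_of_ssubset hXKi
    rcases h with hsimp | ⟨-, hsep⟩
    · exact hKKi ((hK.eq_insert_neighborSet (hXK hvX) hsimp).trans
        (hKi.eq_insert_neighborSet hv hsimp).symm)
    · obtain ⟨S, hS, hSKi, hKS⟩ := hch.exists_isMinSep_inter hKi hK hKKi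
      have hXS : X ⊆ S := fun x hx => hKS ⟨hXK hx, hXKi.1 hx⟩
      rw [hsep S hS hSKi (hXS hvX)] at hXS
      have := (Set.ncard_le_ncard hXS).trans_eq (Set.ncard_singleton v)
      omega

/-- In a connected chordal graph `G`, a vertex `v` of a maximal clique `K_i`
is `K_i`-free iff it is simplicial, or it is a cut-vertex contained in no
minimal separator of `G` included in `K_i` other than `{v}`. -/
theorem stmt17 {α : Type*} [Fintype α] (G : SimpleGraph α)
    (hconn : G.Connected) (hch : Chordal G)
    (Ki : Set α) (hKi : IsMaxClique G Ki) (v : α) (hv : v ∈ Ki) :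
    KFree G Ki v ↔
      (G.IsClique (G.neighborSet v) ∨
        (IsCutVertex G v ∧
          ∀ S : Set α, IsMinSep G S → S ⊆ Ki → v ∈ S → S = {v})) :=
  stmt17_general G hch Ki hKi v hv
end

section
/- Let G be a graph admitting a 4-Steiner root T, let K be a maximal clique of G, and let v ∈ K be a simplicial vertex of G. Then the tree T' obtained from T by: replacing v with a Steiner node, and re-attaching v to a closest central node c of T⟨K⟩ via a path of length 4 − max_{u ∈ K∖{v}} dist_T(c,u) whose internal nodes are all Steiner, is again a 4-Steiner root of G; moreover dist_{T'}(u,w) ≥ dist_T(u,w) for all real u,w. -/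
noncomputable def setEcc {V : Type*} (T : SimpleGraph V) (S : Set V) (v : V) : ℕ :=
  sSup {d | ∃ u ∈ S, T.dist v u = d}

noncomputable def setDiam {V : Type*} (T : SimpleGraph V) (S : Set V) : ℕ :=
  sSup {d | ∃ u ∈ S, ∃ w ∈ S, T.dist u w = d}

noncomputable def setRad {V : Type*} (T : SimpleGraph V) (S : Set V) : ℕ :=
  sInf {e | ∃ v ∈ S, setEcc T S v = e}

noncomputable def setCenter {V : Type*} (T : SimpleGraph V) (S : Set V) : Set V :=
  {v ∈ S | setEcc T S v = setRad T S}

/-- `T` is a `k`-Steiner root of `G` (via the injection `f` of the vertices of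
`G` into the nodes of `T`): `T` is a tree and two distinct vertices of `G` are
adjacent iff their images are at distance at most `k` in `T`. -/
def IsSteinerRoot (k : ℕ) {α β : Type*} (G : SimpleGraph α) (T : SimpleGraph β)
    (f : α → β) : Prop :=
  Function.Injective f ∧ T.IsTree ∧
    ∀ u v : α, u ≠ v → (G.Adj u v ↔ T.dist (f u) (f v) ≤ k)

/-- The vertex set of the smallest subtree of the tree `T` containing `X`:
all nodes lying on a path between two elements of `X`. -/
def span {β : Type*} (T : SimpleGraph β) (X : Set β) : Set β :=
  {w | ∃ u ∈ X, ∃ v ∈ X, ∃ p : T.Walk u v, p.IsPath ∧ w ∈ p.support}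

/-- `M`: the largest distance in `T` from `c` to a vertex of `K ∖ {v}`. -/
noncomputable def maxDistToClique {α β : Type*} (T : SimpleGraph β) (f : α → β)
    (K : Set α) (v : α) (c : β) : ℕ :=
  sSup {d | ∃ u ∈ K, u ≠ v ∧ T.dist c (f u) = d}

/-- The length `L = 4 - max_{u ∈ K∖{v}} dist_T(c,u)` of the re-attachment path. -/
noncomputable def attachLen {α β : Type*} (T : SimpleGraph β) (f : α → β)
    (K : Set α) (v : α) (c : β) : ℕ :=
  4 - maxDistToClique T f K v c

/-- Relation generating the modified tree: the old tree `T` (in which the old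
node of `v` is kept, but becomes Steiner), together with a new path
`c - 0 - 1 - ⋯ - (L-1)` of length `L` hanging from `c`, all of whose internal
nodes are Steiner. -/
def pathRel {β : Type*} (T : SimpleGraph β) (c : β) (L : ℕ) :
    β ⊕ Fin L → β ⊕ Fin L → Prop
  | Sum.inl a, Sum.inl b => T.Adj a b
  | Sum.inl a, Sum.inr i => a = c ∧ (i : ℕ) = 0
  | Sum.inr i, Sum.inr j => (j : ℕ) = (i : ℕ) + 1
  | _, _ => False

/-- The tree obtained from `T` by attaching a path of length `L` at `c`. -/
def newTree {β : Type*} (T : SimpleGraph β) (c : β) (L : ℕ) :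
    SimpleGraph (β ⊕ Fin L) :=
  SimpleGraph.fromRel (pathRel T c L)

/-- The new placement of the real vertices: `v` moves to the end of the new
path (its old node becomes Steiner); every other vertex keeps its node. -/
noncomputable def newEmb {α β : Type*} [DecidableEq α] (f : α → β) (v : α) (L : ℕ) :
    α → β ⊕ Fin L :=
  fun u =>
    if u = v then
      if h : 0 < L then Sum.inr (⟨L - 1, by omega⟩ : Fin L) else Sum.inl (f u)
    else Sum.inl (f u)

/-! The subtree `T⟨K⟩` has diameter at most `4`, so the node at the middle of a diametral path
is within distance `2` of all of it (every node of a tree has a gate on a given path, through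
which all its distances to that path factor); hence the central node `c` is within distance `2`
of `f '' K`, `M ≤ 2` and the new path has length `L = 4 - M ≥ 2`.

In the new tree the distances between vertices other than `v` are those of `T`, while
`dist(w, v) = dist_T(w, c) + L`. This is `≤ 4` iff `dist_T(c, w) ≤ M`, which holds for the
neighbours `K ∖ {v}` of `v` by definition of `M`, and forces adjacency to `v` since then
`dist_T(v, w) ≤ 2 + M ≤ 4`. As `dist_T(v, c) ≤ 2 ≤ L`, no distance decreases. -/

lemma subset_span {V : Type*} {G : SimpleGraph V} {X : Set V} : X ⊆ span G X :=
  fun x hx => ⟨x, hx, x, hx, .nil, .nil, List.mem_singleton_self x⟩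

namespace SimpleGraph

variable {V : Type*} {G : SimpleGraph V} {u v w x : V}

lemma Walk.IsPath.append_of_forall_mem_support {p : G.Walk u v} {q : G.Walk v w}
    (hp : p.IsPath) (hq : q.IsPath) (hpq : ∀ z ∈ p.support, z ∈ q.support → z = v) :
    (p.append q).IsPath := by
  have hq' := hq.support_nodup
  rw [← q.cons_tail_support, List.nodup_cons] at hq'
  rw [Walk.isPath_def, Walk.support_append]
  refine hp.support_nodup.append hq'.2 fun z hzp hzq => ?_
  obtain rfl := hpq z hzp (List.mem_of_mem_tail hzq)
  exact hq'.1 hzq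

lemma IsAcyclic.length_eq_dist (hG : G.IsAcyclic) {p : G.Walk u v} (hp : p.IsPath) :
    p.length = G.dist u v := by
  obtain ⟨q, hq, hlen⟩ := p.reachable.exists_path_of_dist
  rw [← hlen, Subtype.mk.inj ((hG.subsingleton_path u v).elim ⟨p, hp⟩ ⟨q, hq⟩)]

lemma IsAcyclic.dist_add_dist_of_mem_support (hG : G.IsAcyclic) {p : G.Walk u v}
    (hp : p.IsPath) (hw : w ∈ p.support) : G.dist u w + G.dist w v = G.dist u v := by
  classical
  rw [← hG.length_eq_dist (hp.takeUntil hw), ← hG.length_eq_dist (hp.dropUntil hw),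
    ← hG.length_eq_dist hp, ← Walk.length_append, Walk.take_spec]

lemma IsAcyclic.dist_eq_natDist_of_mem_support (hG : G.IsAcyclic) {p : G.Walk u v}
    (hp : p.IsPath) (hw : w ∈ p.support) (hx : x ∈ p.support) :
    G.dist w x = Nat.dist (G.dist u w) (G.dist u x) := by
  obtain ⟨q, r, hq, hr, rfl⟩ := hp.mem_support_iff_exists_append.mp hx
  have hqr := hG.dist_add_dist_of_mem_support hp (Walk.mem_support_append_iff q r |>.mpr
    (Or.inl q.end_mem_support))
  rcases (Walk.mem_support_append_iff q r).mp hw with hwq | hwr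
  · have := hG.dist_add_dist_of_mem_support hq hwq
    simp only [Nat.dist]
    omega
  · have h1 := hG.dist_add_dist_of_mem_support hr hwr
    have h2 := hG.dist_add_dist_of_mem_support hp hw
    rw [G.dist_comm (u := w)]
    simp only [Nat.dist]
    omega

lemma Walk.IsPath.exists_isPath_support_subset {p : G.Walk u v} (hp : p.IsPath)
    (hw : w ∈ p.support) (hx : x ∈ p.support) :
    ∃ r : G.Walk w x, r.IsPath ∧ r.support ⊆ p.support := by
  classical
  obtain ⟨q, r, hq, hr, rfl⟩ := hp.mem_support_iff_exists_append.mp hx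
  rw [Walk.support_append]
  rcases (Walk.mem_support_append_iff q r).mp hw with hwq | hwr
  · exact ⟨q.dropUntil w hwq, hq.dropUntil hwq,
      fun z hz => List.mem_append_left _ (q.support_dropUntil_subset_support hwq hz)⟩
  · refine ⟨(r.takeUntil w hwr).reverse, (hr.takeUntil hwr).reverse, fun z hz => ?_⟩
    rw [Walk.support_reverse, List.mem_reverse] at hz
    have hz := r.support_takeUntil_subset_support hwr hz
    rw [← r.cons_tail_support] at hz
    rcases List.mem_cons.mp hz with rfl | hz
    · exact List.mem_append_left _ q.end_mem_support
    · exact List.mem_append_right _ hz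

lemma IsAcyclic.dist_getVert (hG : G.IsAcyclic) {p : G.Walk u v} (hp : p.IsPath) {k : ℕ}
    (hk : k ≤ p.length) : G.dist u (p.getVert k) = k := by
  rw [← hG.length_eq_dist (hp.take k), Walk.take_length]
  omega

lemma IsTree.exists_gate (hG : G.IsTree) {p : G.Walk u v} (hp : p.IsPath) (x : V) :
    ∃ g ∈ p.support, ∀ t ∈ p.support, G.dist x t = G.dist x g + G.dist g t := by
  classical
  obtain ⟨g, hg, hmin⟩ := p.support.toFinset.exists_min_image (G.dist x) ⟨u, by simp⟩
  rw [List.mem_toFinset] at hg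
  refine ⟨g, hg, fun t ht => ?_⟩
  obtain ⟨q, hq, -⟩ := hG.connected.exists_path_of_dist x g
  obtain ⟨r, hr, hrp⟩ := hp.exists_isPath_support_subset hg ht
  -- `q` meets `p` only in `g`: its other vertices are closer to `x` than `g`.
  have hqr : (q.append r).IsPath := hq.append_of_forall_mem_support hr fun z hzq hzr => by
    have h1 := hG.isAcyclic.dist_add_dist_of_mem_support hq hzq
    have h2 := hmin z (List.mem_toFinset.mpr (hrp hzr))
    exact hG.connected.dist_eq_zero_iff.mp (by omega)
  rw [← hG.isAcyclic.length_eq_dist hqr, Walk.length_append, hG.isAcyclic.length_eq_dist hq,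
    hG.isAcyclic.length_eq_dist hr]

lemma IsTree.dist_le_max_of_mem_support (hG : G.IsTree) {p : G.Walk u v} (hp : p.IsPath)
    (hw : w ∈ p.support) (x : V) : G.dist x w ≤ max (G.dist x u) (G.dist x v) := by
  obtain ⟨g, hg, hgate⟩ := hG.exists_gate hp x
  have hxw := hgate w hw
  have hxu := hgate u p.start_mem_support
  have hxv := hgate v p.end_mem_support
  have hgw := hG.isAcyclic.dist_eq_natDist_of_mem_support hp hg hw
  have hug := hG.isAcyclic.dist_add_dist_of_mem_support hp hg
  have huw := hG.isAcyclic.dist_add_dist_of_mem_support hp hw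
  rw [G.dist_comm (u := g) (v := u)] at hxu
  simp only [Nat.dist] at hgw
  omega

lemma IsTree.exists_mem_span_forall_dist_le (hG : G.IsTree) {X : Set V} (hX : X.Finite)
    (hne : X.Nonempty) {r : ℕ} (hdiam : ∀ x ∈ X, ∀ y ∈ X, G.dist x y ≤ 2 * r) :
    ∃ m ∈ span G X, ∀ s ∈ span G X, G.dist m s ≤ r := by
  obtain ⟨⟨a, b⟩, ⟨ha, hb⟩, hmax⟩ :=
    Set.exists_max_image (X ×ˢ X) (fun z => G.dist z.1 z.2) (hX.prod hX) (hne.prod hne)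
  obtain ⟨p, hp, hlen⟩ := hG.connected.exists_path_of_dist a b
  -- the midpoint of a diametral path
  set m := p.getVert (G.dist a b / 2)
  have ham : G.dist a m = G.dist a b / 2 := hG.isAcyclic.dist_getVert hp (by omega)
  have hm : m ∈ p.support := p.getVert_mem_support _
  have hmX : ∀ x ∈ X, G.dist m x ≤ r := fun x hx => by
    obtain ⟨g, hg, hgate⟩ := hG.exists_gate hp x
    have hxa := hgate a p.start_mem_support
    have hxb := hgate b p.end_mem_support
    have hxm := hgate m hm
    have hagb := hG.isAcyclic.dist_add_dist_of_mem_support hp hg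
    have hgm := hG.isAcyclic.dist_eq_natDist_of_mem_support hp hg hm
    have hxa' : G.dist x a ≤ G.dist a b := hmax (x, a) ⟨hx, ha⟩
    have hxb' : G.dist x b ≤ G.dist a b := hmax (x, b) ⟨hx, hb⟩
    have hab := hdiam a ha b hb
    rw [G.dist_comm (u := g) (v := a)] at hxa
    rw [G.dist_comm (u := m)]
    simp only [Nat.dist] at hgm
    omega
  refine ⟨m, ⟨a, ha, b, hb, p, hp, hm⟩, ?_⟩
  rintro s ⟨x, hx, y, hy, q, hq, hs⟩
  exact (hG.dist_le_max_of_mem_support hq hs m).trans (max_le (hmX x hx) (hmX y hy))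

lemma Walk.IsCycle.exists_adj_ne {p : G.Walk u u} (hp : p.IsCycle) (hx : x ∈ p.support) :
    ∃ y z, y ≠ z ∧ G.Adj x y ∧ G.Adj x z ∧ y ∈ p.support ∧ z ∈ p.support := by
  obtain ⟨y, z, hyz, hset⟩ := Set.ncard_eq_two.mp (hp.ncard_neighborSet_toSubgraph_eq_two hx)
  have hy : p.toSubgraph.Adj x y := by rw [← Subgraph.mem_neighborSet, hset]; simp
  have hz : p.toSubgraph.Adj x z := by rw [← Subgraph.mem_neighborSet, hset]; simp
  exact ⟨y, z, hyz, hy.adj_sub, hz.adj_sub, p.mem_verts_toSubgraph.mp hy.snd_mem,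
    p.mem_verts_toSubgraph.mp hz.snd_mem⟩

/-- On a cycle, a vertex of maximal height has two distinct neighbours of no greater height. -/
lemma isAcyclic_of_height (h : V → ℕ) (h0 : (G.induce {x | h x = 0}).IsAcyclic)
    (hpos : ∀ x, 0 < h x → ∀ y z, G.Adj x y → G.Adj x z → h y ≤ h x → h z ≤ h x →
      y = z) :
    G.IsAcyclic := by
  classical
  intro u p hp
  obtain ⟨x, hx, hmax⟩ := p.support.toFinset.exists_max_image h ⟨u, by simp⟩
  rw [List.mem_toFinset] at hx
  rcases Nat.eq_zero_or_pos (h x) with hx0 | hxpos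
  · have hsupp : ∀ t ∈ p.support, t ∈ {x | h x = 0} := fun t ht =>
      Nat.eq_zero_of_le_zero (hx0 ▸ hmax t (List.mem_toFinset.mpr ht))
    have hp' : ((p.induce _ hsupp).map (Embedding.induce _).toHom).IsCycle := by
      rw [Walk.map_induce]
      exact hp
    exact h0 _ ((Walk.isCycle_map_iff_of_injective Subtype.val_injective).mp hp')
  · obtain ⟨y, z, hyz, hy, hz, hyp, hzp⟩ := hp.exists_adj_ne hx
    exact hyz (hpos x hxpos y z hy hz (hmax y (List.mem_toFinset.mpr hyp))
      (hmax z (List.mem_toFinset.mpr hzp)))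

lemma Reachable.le_add_dist {φ : V → ℕ} (hφ : ∀ ⦃y z⦄, G.Adj y z → φ z ≤ φ y + 1)
    (h : G.Reachable u v) : φ v ≤ φ u + G.dist u v := by
  suffices ∀ {a b : V} (p : G.Walk a b), φ b ≤ φ a + p.length by
    obtain ⟨p, hp⟩ := h.exists_walk_length_eq_dist
    exact hp ▸ this p
  intro a b p
  induction p with
  | nil => simp
  | cons hadj p ih =>
    have := hφ hadj
    rw [Walk.length_cons]
    omega

end SimpleGraph

section newTree

open SimpleGraph

variable {β : Type*} {T : SimpleGraph β} {c : β} {L : ℕ}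

/-- A node of `newTree T c L` sits `newTree.height` steps above the node `newTree.foot` of `T`. -/
def newTree.foot (c : β) : β ⊕ Fin L → β :=
  Sum.elim id fun _ => c

def newTree.height : β ⊕ Fin L → ℕ :=
  Sum.elim (fun _ => 0) fun i => i + 1

open newTree

lemma newTree_adj_inl_inl {a b : β} :
    (newTree T c L).Adj (.inl a) (.inl b) ↔ T.Adj a b := by
  simp only [newTree, fromRel_adj, pathRel, ne_eq, Sum.inl.injEq, T.adj_comm b, or_self]
  exact ⟨And.right, fun h => ⟨h.ne, h⟩⟩

lemma newTree_adj_inl_inr {a : β} {i : Fin L} :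
    (newTree T c L).Adj (.inl a) (.inr i) ↔ a = c ∧ (i : ℕ) = 0 := by
  simp [newTree, pathRel]

lemma newTree_adj_inr_inr {i j : Fin L} :
    (newTree T c L).Adj (.inr i) (.inr j) ↔ (j : ℕ) = i + 1 ∨ (i : ℕ) = j + 1 := by
  simp only [newTree, fromRel_adj, pathRel, ne_eq, Sum.inr.injEq, and_iff_right_iff_imp]
  rintro h rfl
  omega

lemma foot_height_of_newTree_adj {x y : β ⊕ Fin L} (h : (newTree T c L).Adj x y) :
    (foot c x = foot c y ∧ (height x = height y + 1 ∨ height y = height x + 1)) ∨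
      (T.Adj (foot c x) (foot c y) ∧ height x = height y) := by
  rcases x with a | i <;> rcases y with b | j
  · exact .inr ⟨newTree_adj_inl_inl.mp h, rfl⟩
  · obtain ⟨rfl, hj⟩ := newTree_adj_inl_inr.mp h
    exact .inl ⟨rfl, by simp [height, hj]⟩
  · obtain ⟨rfl, hi⟩ := newTree_adj_inl_inr.mp h.symm
    exact .inl ⟨rfl, by simp [height, hi]⟩
  · have := newTree_adj_inr_inr.mp h
    exact .inl ⟨rfl, by simp only [height, Sum.elim_inr]; omega⟩

lemma newTree.eq_of_foot_eq_of_height_eq {x y : β ⊕ Fin L} (hfoot : foot c x = foot c y)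
    (hheight : height x = height y) : x = y := by
  rcases x with a | i <;> rcases y with b | j <;> simp_all [foot, height, Fin.ext_iff]

lemma newTree.foot_eq_of_height_pos {x : β ⊕ Fin L} (hx : 0 < height x) : foot c x = c := by
  rcases x with a | i
  · simp [height] at hx
  · rfl

lemma exists_newTree_walk_inl (hT : T.Connected) (a : β) (y : β ⊕ Fin L) :
    ∃ p : (newTree T c L).Walk (.inl a) y, p.length = T.dist a (foot c y) + height y := by
  let inlHom : T →g newTree T c L := ⟨Sum.inl, newTree_adj_inl_inl.mpr⟩
  rcases y with b | ⟨k, hk⟩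
  · obtain ⟨p, hp⟩ := hT.exists_walk_length_eq_dist a b
    exact ⟨p.map inlHom, by simp [hp, foot, height]⟩
  · induction k with
    | zero =>
      obtain ⟨p, hp⟩ := hT.exists_walk_length_eq_dist a c
      exact ⟨(p.map inlHom).concat (newTree_adj_inl_inr.mpr ⟨rfl, rfl⟩),
        by simp [hp, foot, height]⟩
    | succ k ih =>
      obtain ⟨p, hp⟩ := ih (by omega)
      exact ⟨p.concat (newTree_adj_inr_inr.mpr (.inl rfl)),
        by simp [hp, foot, height, add_assoc]⟩

lemma newTree_connected (hT : T.Connected) : (newTree T c L).Connected := by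
  obtain ⟨a⟩ := hT.nonempty
  have hreach (y : β ⊕ Fin L) : (newTree T c L).Reachable (.inl a) y :=
    (exists_newTree_walk_inl hT a y).elim fun p _ => p.reachable
  exact (connected_iff _).mpr ⟨fun x y => (hreach x).symm.trans (hreach y), ⟨.inl a⟩⟩

lemma newTree_dist_inl (hT : T.Connected) (a : β) (y : β ⊕ Fin L) :
    (newTree T c L).dist (.inl a) y = T.dist a (foot c y) + height y := by
  obtain ⟨p, hp⟩ := exists_newTree_walk_inl hT a y
  refine le_antisymm (hp ▸ dist_le p) ?_
  have := p.reachable.le_add_dist (φ := fun y => T.dist a (foot c y) + height y) ?_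
  · simpa [foot, height] using this
  intro y z h
  rcases foot_height_of_newTree_adj h with ⟨hfoot, hheight⟩ | ⟨hadj, hheight⟩
  · rw [hfoot]
    omega
  · have := hadj.reachable.dist_triangle_right a
    rw [dist_eq_one_iff_adj.mpr hadj] at this
    omega

lemma newTree_isAcyclic (hT : T.IsAcyclic) : (newTree T c L).IsAcyclic := by
  refine isAcyclic_of_height height ?_ fun x hx y z hy hz hyx hzx => ?_
  · let footHom : (newTree T c L).induce {x | height x = 0} →g T :=
      ⟨fun x => foot c x.1, fun {x y} h => by
        have hx : height x.1 = 0 := x.2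
        have hy : height y.1 = 0 := y.2
        rcases foot_height_of_newTree_adj (induce_adj.mp h) with ⟨-, h'⟩ | ⟨h', -⟩
        · omega
        · exact h'⟩
    exact hT.comap footHom fun x y h =>
      Subtype.ext (eq_of_foot_eq_of_height_eq h (x.2.trans y.2.symm))
  · have below (y) (hy : (newTree T c L).Adj x y) (hyx : height y ≤ height x) :
        foot c y = foot c x ∧ height y = height x - 1 := by
      rcases foot_height_of_newTree_adj hy with ⟨hfoot, hheight⟩ | ⟨hadj, hheight⟩
      · exact ⟨hfoot.symm, by omega⟩
      · rw [foot_eq_of_height_pos hx, foot_eq_of_height_pos (hheight ▸ hx)] at hadj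
        exact absurd hadj T.irrefl
    obtain ⟨hfy, hhy⟩ := below y hy hyx
    obtain ⟨hfz, hhz⟩ := below z hz hzx
    exact eq_of_foot_eq_of_height_eq (hfy.trans hfz.symm) (hhy.trans hhz.symm)

lemma newTree_isTree (hT : T.IsTree) : (newTree T c L).IsTree :=
  ⟨newTree_connected hT.connected, newTree_isAcyclic hT.isAcyclic⟩

end newTree

section newEmb

open SimpleGraph newTree

variable {α β : Type*} [DecidableEq α] {G : SimpleGraph α} {T : SimpleGraph β} {f : α → β}
  {v : α} {c : β} {L : ℕ}

lemma newEmb_self (hL : 0 < L) : newEmb f v L v = .inr ⟨L - 1, by omega⟩ := by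
  simp [newEmb, hL]

lemma newEmb_of_ne {u : α} (hu : u ≠ v) : newEmb f v L u = .inl (f u) := by
  simp [newEmb, hu]

lemma newEmb_injective (hf : Function.Injective f) (hL : 0 < L) :
    Function.Injective (newEmb f v L) := by
  intro u w h
  by_cases hu : u = v <;> by_cases hw : w = v
  · exact hu.trans hw.symm
  all_goals simp [newEmb_self hL, newEmb_of_ne, hu, hw, hf.eq_iff] at h
  exact h

lemma newTree_dist_newEmb_of_ne (hT : T.Connected) {u w : α} (hu : u ≠ v) (hw : w ≠ v) :
    (newTree T c L).dist (newEmb f v L u) (newEmb f v L w) = T.dist (f u) (f w) := by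
  simp [newEmb_of_ne hu, newEmb_of_ne hw, newTree_dist_inl hT, foot, height]

lemma newTree_dist_newEmb_self (hT : T.Connected) (hL : 0 < L) {u : α} (hu : u ≠ v) :
    (newTree T c L).dist (newEmb f v L u) (newEmb f v L v) = T.dist (f u) c + L := by
  simp only [newEmb_of_ne hu, newEmb_self hL, newTree_dist_inl hT, foot, height, Sum.elim_inr]
  omega

theorem IsSteinerRoot.newTree_newEmb {k : ℕ} (hroot : IsSteinerRoot k G T f) (hL : 0 < L)
    (hadj : ∀ w, w ≠ v → (G.Adj w v ↔ T.dist (f w) c + L ≤ k)) :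
    IsSteinerRoot k G (newTree T c L) (newEmb f v L) := by
  obtain ⟨hinj, hT, hiff⟩ := hroot
  refine ⟨newEmb_injective hinj hL, newTree_isTree hT, fun u w huw => ?_⟩
  rcases eq_or_ne u v with rfl | hu
  · rw [G.adj_comm, (newTree T c L).dist_comm, newTree_dist_newEmb_self hT.connected hL huw.symm]
    exact hadj w huw.symm
  rcases eq_or_ne w v with rfl | hw
  · rw [newTree_dist_newEmb_self hT.connected hL hu]
    exact hadj u hu
  rw [newTree_dist_newEmb_of_ne hT.connected hu hw]
  exact hiff u w huw

lemma dist_le_newTree_dist (hT : T.Connected) (hL : 0 < L) (hvc : T.dist (f v) c ≤ L)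
    (u w : α) :
    T.dist (f u) (f w) ≤ (newTree T c L).dist (newEmb f v L u) (newEmb f v L w) := by
  have to_v {u : α} (hu : u ≠ v) :
      T.dist (f u) (f v) ≤ (newTree T c L).dist (newEmb f v L u) (newEmb f v L v) := by
    rw [newTree_dist_newEmb_self hT hL hu]
    calc T.dist (f u) (f v) ≤ T.dist (f u) c + T.dist c (f v) := hT.dist_triangle
      _ ≤ T.dist (f u) c + L := by rw [T.dist_comm (u := c)]; omega
  rcases eq_or_ne u v with rfl | hu
  · rcases eq_or_ne w u with rfl | hw
    · simp
    · rw [T.dist_comm, (newTree T c L).dist_comm]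
      exact to_v hw
  rcases eq_or_ne w v with rfl | hw
  · exact to_v hu
  · rw [newTree_dist_newEmb_of_ne hT hu hw]

end newEmb

section center

open SimpleGraph

variable {V : Type*} {G : SimpleGraph V} {S : Set V} {u v : V}

lemma dist_le_setEcc [Finite V] (hu : u ∈ S) : G.dist v u ≤ setEcc G S v :=
  le_csSup ((Set.finite_range (G.dist v)).bddAbove.mono
    (by rintro _ ⟨w, -, rfl⟩; exact ⟨w, rfl⟩)) ⟨u, hu, rfl⟩

lemma setEcc_le {n : ℕ} (h : ∀ u ∈ S, G.dist v u ≤ n) : setEcc G S v ≤ n :=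
  csSup_le' (by rintro _ ⟨u, hu, rfl⟩; exact h u hu)

lemma setRad_le_setEcc (hv : v ∈ S) : setRad G S ≤ setEcc G S v :=
  Nat.sInf_le ⟨v, hv, rfl⟩

lemma SimpleGraph.IsTree.dist_le_of_mem_setCenter [Finite V] (hG : G.IsTree) {X : Set V}
    (hne : X.Nonempty) {r : ℕ} (hdiam : ∀ x ∈ X, ∀ y ∈ X, G.dist x y ≤ 2 * r) {c : V}
    (hc : c ∈ setCenter G (span G X)) (hu : u ∈ span G X) : G.dist c u ≤ r := by
  obtain ⟨m, hm, hmr⟩ := hG.exists_mem_span_forall_dist_le (Set.toFinite X) hne hdiam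
  calc G.dist c u ≤ setEcc G (span G X) c := dist_le_setEcc hu
    _ = setRad G (span G X) := hc.2
    _ ≤ setEcc G (span G X) m := setRad_le_setEcc hm
    _ ≤ r := setEcc_le hmr

end center

section clique

variable {α β : Type*} {G : SimpleGraph α} {T : SimpleGraph β} {f : α → β} {K : Set α}
  {v : α} {c : β}

lemma dist_le_maxDistToClique [Finite β] {u : α} (hu : u ∈ K) (huv : u ≠ v) :
    T.dist c (f u) ≤ maxDistToClique T f K v c :=
  le_csSup ((Set.finite_range (T.dist c)).bddAbove.mono
    (by rintro _ ⟨w, -, -, rfl⟩; exact ⟨f w, rfl⟩)) ⟨u, hu, huv, rfl⟩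

lemma maxDistToClique_le {n : ℕ} (h : ∀ u ∈ K, u ≠ v → T.dist c (f u) ≤ n) :
    maxDistToClique T f K v c ≤ n :=
  csSup_le' (by rintro _ ⟨u, hu, huv, rfl⟩; exact h u hu huv)

lemma IsSteinerRoot.dist_le_of_isClique {k : ℕ} (hroot : IsSteinerRoot k G T f)
    (hK : G.IsClique K) {u w : α} (hu : u ∈ K) (hw : w ∈ K) : T.dist (f u) (f w) ≤ k := by
  rcases eq_or_ne u w with rfl | huw
  · simp
  · exact (hroot.2.2 u w huw).mp (hK hu hw huw)

end clique

theorem stmt19_general {α β : Type*} [DecidableEq α] [Fintype β]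
    (G : SimpleGraph α) (T : SimpleGraph β) (f : α → β)
    (hroot : IsSteinerRoot 4 G T f) (K : Set α) (hK : IsMaxClique G K)
    (v : α) (hv : v ∈ K) (hsimp : G.neighborSet v = K \ {v})
    (c : β) (hc : c ∈ setCenter T (span T (f '' K))) :
    IsSteinerRoot 4 G (newTree T c (attachLen T f K v c))
        (newEmb f v (attachLen T f K v c)) ∧
      ∀ u w : α, T.dist (f u) (f w) ≤
        (newTree T c (attachLen T f K v c)).dist
          (newEmb f v (attachLen T f K v c) u)
          (newEmb f v (attachLen T f K v c) w) := by
  have hT := hroot.2.1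
  have hcK (u : α) (hu : u ∈ K) : T.dist c (f u) ≤ 2 := by
    refine hT.dist_le_of_mem_setCenter (Set.Nonempty.image f ⟨v, hv⟩) ?_ hc
      (subset_span ⟨u, hu, rfl⟩)
    rintro _ ⟨x, hx, rfl⟩ _ ⟨y, hy, rfl⟩
    exact hroot.dist_le_of_isClique hK.1 hx hy
  set M := maxDistToClique T f K v c
  have hM : M ≤ 2 := maxDistToClique_le fun u hu _ => hcK u hu
  have hvc : T.dist (f v) c ≤ 2 := T.dist_comm ▸ hcK v hv
  have hadj (w : α) (hw : w ≠ v) : G.Adj w v ↔ T.dist (f w) c + (4 - M) ≤ 4 := by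
    constructor
    · intro h
      have hwK : w ∈ K \ {v} := hsimp ▸ h.symm
      have := dist_le_maxDistToClique (T := T) (f := f) (c := c) hwK.1 hw
      rw [T.dist_comm]
      omega
    · intro h
      refine (hroot.2.2 w v hw).mpr ?_
      calc T.dist (f w) (f v) ≤ T.dist (f w) c + T.dist c (f v) := hT.connected.dist_triangle
        _ ≤ 4 := by rw [T.dist_comm (u := c)]; omega
  exact ⟨hroot.newTree_newEmb (L := 4 - M) (by omega) hadj,
    dist_le_newTree_dist (L := 4 - M) hT.connected (by omega) (by omega)⟩

/-- Let `T` be a `4`-Steiner root of `G`, `K` a maximal clique, `v ∈ K`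
simplicial (`N_G(v) = K ∖ {v}`), and `c` a central node of `T⟨K⟩` closest to
`v`. Replacing `v` by a Steiner node and re-attaching `v` to `c` by a path of
length `4 − max_{u ∈ K∖{v}} dist_T(c,u)` with all internal nodes Steiner
yields again a `4`-Steiner root of `G`, and all distances between real
vertices can only increase. -/
theorem stmt19 {α β : Type*} [Fintype α] [DecidableEq α] [Fintype β]
    (G : SimpleGraph α) (hG : G.Connected) (T : SimpleGraph β) (f : α → β)
    (hroot : IsSteinerRoot 4 G T f) (K : Set α) (hK : IsMaxClique G K)
    (v : α) (hv : v ∈ K) (hsimp : G.neighborSet v = K \ {v})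
    (c : β) (hc : c ∈ setCenter T (span T (f '' K)))
    (hclosest : ∀ c' ∈ setCenter T (span T (f '' K)),
      T.dist (f v) c ≤ T.dist (f v) c') :
    IsSteinerRoot 4 G (newTree T c (attachLen T f K v c))
        (newEmb f v (attachLen T f K v c)) ∧
      ∀ u w : α, T.dist (f u) (f w) ≤
        (newTree T c (attachLen T f K v c)).dist
          (newEmb f v (attachLen T f K v c) u)
          (newEmb f v (attachLen T f K v c) w) :=
  stmt19_general G T f hroot K hK v hv hsimp c hc
end
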